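/- arXiv:1310.0966 — 5 statements merged into one kernel-verified Lean document; each statement's English description precedes it below -/
import Mathlib

section
/- Sufficiency of the geometric KKT conditions: Let N ≥ 1, let q : Fin N → ℝ be priors with q antitone, and let v : Fin N → EuclideanSpace ℝ (Fin 3) with ‖v i‖ ≤ 1. Suppose r : Fin N → ℝ with r i ≥ 0 and w : Fin N → EuclideanSpace ℝ (Fin 3) satisfy the geometric KKT conditions for (q, v). Then q 0 + r 0 is the greatest element of the set of success probabilities {P(M) : M an N-outcome POVM}; in particular, the guessing probability equals q 0 + r 0, and it is attained by the POVM M i = p i • (1 − (w i 0 • σ₁ + w i 1 • σ₂ + w i 2 • σ₃)) where p is any witness of condition (ii). -/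
open Matrix Complex Finset RealInnerProductSpace
open scoped ComplexOrder

/-- The first Pauli matrix. -/
noncomputable def pauli1 : Matrix (Fin 2) (Fin 2) ℂ := !![0, 1; 1, 0]

/-- The second Pauli matrix. -/
noncomputable def pauli2 : Matrix (Fin 2) (Fin 2) ℂ := !![0, -Complex.I; Complex.I, 0]

/-- The third Pauli matrix. -/
noncomputable def pauli3 : Matrix (Fin 2) (Fin 2) ℂ := !![1, 0; 0, -1]

/-- The operator `v ⬝ σ` for a Bloch vector `v`. -/
noncomputable def blochOp (v : EuclideanSpace ℝ (Fin 3)) : Matrix (Fin 2) (Fin 2) ℂ :=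
  (v 0 : ℂ) • pauli1 + (v 1 : ℂ) • pauli2 + (v 2 : ℂ) • pauli3

/-- The qubit state with Bloch vector `v`. -/
noncomputable def qubitState (v : EuclideanSpace ℝ (Fin 3)) : Matrix (Fin 2) (Fin 2) ℂ :=
  (1 / 2 : ℂ) • (1 + blochOp v)

/-- An `N`-outcome POVM on `ℂ^d`. -/
def IsPOVM {N d : ℕ} (M : Fin N → Matrix (Fin d) (Fin d) ℂ) : Prop :=
  (∀ i, (M i).PosSemidef) ∧ ∑ i, M i = 1

/-- Priors: a probability distribution. -/
def IsPriors {N : ℕ} (q : Fin N → ℝ) : Prop :=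
  (∀ i, 0 ≤ q i) ∧ ∑ i, q i = 1

/-- Success probability of the POVM `M` for qubit states with Bloch vectors `v`
and priors `q`. -/
noncomputable def succProb {N : ℕ} (q : Fin N → ℝ) (v : Fin N → EuclideanSpace ℝ (Fin 3))
    (M : Fin N → Matrix (Fin 2) (Fin 2) ℂ) : ℝ :=
  ∑ i, q i * (Matrix.trace (qubitState (v i) * M i)).re

/-- The geometric KKT conditions for `(q, v)` satisfied by `(r, w)`. -/
def GeomKKT {N : ℕ} (q : Fin N → ℝ) (v : Fin N → EuclideanSpace ℝ (Fin 3))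
    (r : Fin N → ℝ) (w : Fin N → EuclideanSpace ℝ (Fin 3)) : Prop :=
  (∀ i j, r i • w i - r j • w j = q j • v j - q i • v i) ∧
  (∃ p : Fin N → ℝ, (∀ i, 0 < p i) ∧ (∑ i, p i = 1) ∧ (∑ i, p i • w i = 0)) ∧
  (∀ i, ‖w i‖ = 1) ∧
  (∀ i j, r i - r j = q j - q i)

/-!
Semidefinite duality. By the KKT conditions, `λ = q i + r i` and `c = q i • v i + r i • w i`
do not depend on `i`, so the operator `Y = (λ • 1 + c ⬝ σ) / 2` satisfies
`Y - q i • ρ(v i) = r i • (1 + w i ⬝ σ) / 2 ≥ 0` for every `i`. Hence every POVM has success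
probability at most `tr Y = λ`. Conversely, since each `w i` is a unit vector,
`M i = p i • (1 - w i ⬝ σ)` is a POVM whose success probability is
`∑ i, p i * (λ - ⟪c, w i⟫) = λ - ⟪c, ∑ i, p i • w i⟫ = λ`.
-/

theorem Matrix.PosSemidef.trace_mul_nonneg {n 𝕜 : Type*} [Fintype n] [RCLike 𝕜]
    {A B : Matrix n n 𝕜} (hA : A.PosSemidef) (hB : B.PosSemidef) : 0 ≤ (A * B).trace := by
  classical
  open scoped MatrixOrder in
  obtain ⟨C, rfl⟩ := CStarAlgebra.nonneg_iff_eq_star_mul_self.mp hA.nonneg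
  rw [star_eq_conjTranspose, mul_assoc, trace_mul_comm]
  simpa [mul_assoc] using (hB.mul_mul_conjTranspose_same C).trace_nonneg

theorem IsPOVM.sum_re_trace_mul_le {N d : ℕ} {M : Fin N → Matrix (Fin d) (Fin d) ℂ}
    (hM : IsPOVM M) (A : Fin N → Matrix (Fin d) (Fin d) ℂ) (Y : Matrix (Fin d) (Fin d) ℂ)
    (hY : ∀ i, (Y - A i).PosSemidef) : ∑ i, (A i * M i).trace.re ≤ Y.trace.re := by
  calc ∑ i, (A i * M i).trace.re
      ≤ ∑ i, (Y * M i).trace.re := by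
        gcongr with i
        simpa [sub_mul, trace_sub] using (hY i).trace_mul_nonneg (hM.1 i)
    _ = Y.trace.re := by rw [← Complex.re_sum, ← trace_sum, ← mul_sum, hM.2, mul_one]

noncomputable def blochOpLinearMap :
    EuclideanSpace ℝ (Fin 3) →ₗ[ℝ] Matrix (Fin 2) (Fin 2) ℂ where
  toFun := blochOp
  map_add' u x := by simp only [blochOp, PiLp.add_apply, Complex.ofReal_add, add_smul]; abel
  map_smul' a u := by
    simp only [blochOp, PiLp.smul_apply, smul_eq_mul, Complex.ofReal_mul, smul_add, mul_smul,
      RingHom.id_apply, ← Complex.coe_smul]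

theorem blochOp_zero : blochOp 0 = 0 :=
  map_zero blochOpLinearMap

theorem blochOp_add (u x : EuclideanSpace ℝ (Fin 3)) : blochOp (u + x) = blochOp u + blochOp x :=
  map_add blochOpLinearMap u x

theorem blochOp_smul (a : ℝ) (u : EuclideanSpace ℝ (Fin 3)) :
    blochOp (a • u) = (a : ℂ) • blochOp u :=
  (map_smul blochOpLinearMap a u).trans (Complex.coe_smul a _).symm

theorem blochOp_neg (u : EuclideanSpace ℝ (Fin 3)) : blochOp (-u) = -blochOp u :=
  map_neg blochOpLinearMap u

theorem blochOp_sum {ι : Type*} (s : Finset ι) (f : ι → EuclideanSpace ℝ (Fin 3)) :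
    blochOp (∑ i ∈ s, f i) = ∑ i ∈ s, blochOp (f i) :=
  map_sum blochOpLinearMap f s

theorem blochOp_eq_of (u : EuclideanSpace ℝ (Fin 3)) :
    blochOp u = !![(u 2 : ℂ), u 0 - u 1 * I; u 0 + u 1 * I, -(u 2 : ℂ)] := by
  ext i j
  fin_cases i <;> fin_cases j <;> simp [blochOp, pauli1, pauli2, pauli3]; ring

theorem trace_blochOp (u : EuclideanSpace ℝ (Fin 3)) : (blochOp u).trace = 0 := by
  simp [blochOp_eq_of, trace_fin_two]

theorem blochOp_isHermitian (u : EuclideanSpace ℝ (Fin 3)) : (blochOp u).IsHermitian := by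
  rw [IsHermitian, blochOp_eq_of]
  ext i j
  fin_cases i <;> fin_cases j <;> simp [conjTranspose_apply, sub_eq_add_neg]

theorem blochOp_mul_self (u : EuclideanSpace ℝ (Fin 3)) :
    blochOp u * blochOp u = ((‖u‖ ^ 2 : ℝ) : ℂ) • 1 := by
  rw [EuclideanSpace.real_norm_sq_eq, blochOp_eq_of]
  ext i j
  fin_cases i <;> fin_cases j <;> simp [mul_apply, Fin.sum_univ_three] <;> ring_nf <;>
    simp [I_sq]

theorem trace_blochOp_mul_blochOp (u x : EuclideanSpace ℝ (Fin 3)) :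
    (blochOp u * blochOp x).trace = 2 * ⟪u, x⟫ := by
  rw [blochOp_eq_of, blochOp_eq_of]
  simp [trace_fin_two, PiLp.inner_apply, Fin.sum_univ_three]
  ring_nf
  simp [I_sq]

theorem re_trace_qubitState_mul (v u : EuclideanSpace ℝ (Fin 3)) :
    (qubitState v * (1 - blochOp u)).trace.re = 1 - ⟪v, u⟫ := by
  have : (1 + blochOp v) * (1 - blochOp u) =
      1 - blochOp u + blochOp v - blochOp v * blochOp u := by
    noncomm_ring
  rw [qubitState, smul_mul, trace_smul, this, trace_sub, trace_add, trace_sub, trace_blochOp,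
    trace_blochOp, trace_blochOp_mul_blochOp, trace_one]
  simp
  ring

theorem posSemidef_smul_one_sub_blochOp {u : EuclideanSpace ℝ (Fin 3)} (hu : ‖u‖ = 1) {p : ℝ}
    (hp : 0 ≤ p) : ((p : ℂ) • (1 - blochOp u)).PosSemidef := by
  -- `1 - u ⬝ σ` is twice the projector onto the `-1` eigenspace of `u ⬝ σ`
  have hA : (p : ℂ) • (1 - blochOp u) =
      ((p / 2 : ℝ) : ℂ) • ((1 - blochOp u)ᴴ * (1 - blochOp u)) := by
    rw [conjTranspose_sub, conjTranspose_one, (blochOp_isHermitian u).eq, sub_mul, mul_sub,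
      mul_sub, blochOp_mul_self, hu]
    simp only [one_mul, mul_one, one_pow, ofReal_one, ofReal_div]
    module
  rw [hA]
  exact (posSemidef_conjTranspose_mul_self _).smul (by exact_mod_cast by positivity)

theorem isPOVM_smul_one_sub_blochOp {N : ℕ} {w : Fin N → EuclideanSpace ℝ (Fin 3)}
    (hw : ∀ i, ‖w i‖ = 1) {p : Fin N → ℝ} (hp : ∀ i, 0 ≤ p i) (hp1 : ∑ i, p i = 1)
    (hpw : ∑ i, p i • w i = 0) : IsPOVM fun i => (p i : ℂ) • (1 - blochOp (w i)) := by
  refine ⟨fun i => posSemidef_smul_one_sub_blochOp (hw i) (hp i), ?_⟩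
  calc ∑ i, (p i : ℂ) • (1 - blochOp (w i))
      = ((∑ i, p i : ℝ) : ℂ) • 1 - blochOp (∑ i, p i • w i) := by
        simp only [smul_sub, blochOp_sum, blochOp_smul, sum_sub_distrib, ← sum_smul, ofReal_sum]
    _ = 1 := by rw [hp1, hpw, blochOp_zero, ofReal_one, one_smul, sub_zero]

namespace GeomKKT

variable {N : ℕ} {q : Fin N → ℝ} {v : Fin N → EuclideanSpace ℝ (Fin 3)} {r : Fin N → ℝ}
  {w : Fin N → EuclideanSpace ℝ (Fin 3)}

theorem add_eq (h : GeomKKT q v r w) (i j : Fin N) : q i + r i = q j + r j := by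
  linarith [h.2.2.2 i j]

theorem smul_add_smul_eq (h : GeomKKT q v r w) (i j : Fin N) :
    q i • v i + r i • w i = q j • v j + r j • w j := by
  linear_combination (norm := module) h.1 i j

theorem succProb_le (h : GeomKKT q v r w) (hr : ∀ i, 0 ≤ r i)
    {M : Fin N → Matrix (Fin 2) (Fin 2) ℂ} (hM : IsPOVM M) (j : Fin N) :
    succProb q v M ≤ q j + r j := by
  set Y : Matrix (Fin 2) (Fin 2) ℂ :=
    (1 / 2 : ℂ) • (((q j + r j : ℝ) : ℂ) • 1 + blochOp (q j • v j + r j • w j))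
  have hY : ∀ i,
      Y - (q i : ℂ) • qubitState (v i) = ((r i / 2 : ℝ) : ℂ) • (1 - blochOp (-w i)) := by
    intro i
    simp only [Y]
    rw [h.add_eq j i, h.smul_add_smul_eq j i]
    simp only [qubitState, blochOp_add, blochOp_smul, blochOp_neg]
    push_cast
    module
  calc succProb q v M = ∑ i, ((q i : ℂ) • qubitState (v i) * M i).trace.re := by
        simp [succProb, trace_smul]
    _ ≤ Y.trace.re := hM.sum_re_trace_mul_le _ _ fun i => by
        rw [hY i]
        exact posSemidef_smul_one_sub_blochOp (by rw [norm_neg, h.2.2.1 i]) (by linarith [hr i])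
    _ = q j + r j := by simp [Y, trace_blochOp]; ring

theorem succProb_eq (h : GeomKKT q v r w) {p : Fin N → ℝ} (hp1 : ∑ i, p i = 1)
    (hpw : ∑ i, p i • w i = 0) (j : Fin N) :
    succProb q v (fun i => (p i : ℂ) • (1 - blochOp (w i))) = q j + r j := by
  have hterm : ∀ i, q i * (qubitState (v i) * ((p i : ℂ) • (1 - blochOp (w i)))).trace.re
      = p i * (q j + r j) - ⟪q j • v j + r j • w j, p i • w i⟫ := by
    intro i
    rw [Matrix.mul_smul, trace_smul, smul_eq_mul, re_ofReal_mul, re_trace_qubitState_mul,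
      h.smul_add_smul_eq j i, h.add_eq j i, real_inner_smul_right, inner_add_left,
      real_inner_smul_left, real_inner_smul_left, real_inner_self_eq_norm_sq, h.2.2.1 i]
    ring
  rw [succProb, sum_congr rfl fun i _ => hterm i, sum_sub_distrib, ← sum_mul, ← inner_sum, hp1,
    hpw, inner_zero_right]
  ring

end GeomKKT

theorem geomKKT_sufficiency_general (N : ℕ) (hN : 0 < N)
    (q : Fin N → ℝ)
    (v : Fin N → EuclideanSpace ℝ (Fin 3))
    (r : Fin N → ℝ) (w : Fin N → EuclideanSpace ℝ (Fin 3))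
    (hr : ∀ i, 0 ≤ r i) (hkkt : GeomKKT q v r w) :
    IsGreatest {x | ∃ M : Fin N → Matrix (Fin 2) (Fin 2) ℂ, IsPOVM M ∧ succProb q v M = x}
      (q ⟨0, hN⟩ + r ⟨0, hN⟩) ∧
    ∀ p : Fin N → ℝ, (∀ i, 0 < p i) → (∑ i, p i = 1) → (∑ i, p i • w i = 0) →
      IsPOVM (fun i => (p i : ℂ) • (1 - blochOp (w i))) ∧
      succProb q v (fun i => (p i : ℂ) • (1 - blochOp (w i))) = q ⟨0, hN⟩ + r ⟨0, hN⟩ := by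
  have optimal (p : Fin N → ℝ) (hp : ∀ i, 0 < p i) (hp1 : ∑ i, p i = 1)
      (hpw : ∑ i, p i • w i = 0) :=
    And.intro (isPOVM_smul_one_sub_blochOp hkkt.2.2.1 (fun i => (hp i).le) hp1 hpw)
      (hkkt.succProb_eq hp1 hpw ⟨0, hN⟩)
  obtain ⟨p, hp, hp1, hpw⟩ := hkkt.2.1
  refine ⟨⟨⟨_, optimal p hp hp1 hpw⟩, ?_⟩, optimal⟩
  rintro x ⟨M, hM, rfl⟩
  exact hkkt.succProb_le hr hM _

/-- Sufficiency of the geometric KKT conditions: the guessing probability is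
`q 0 + r 0`, attained by the POVM `M i = p i • (1 - w i ⬝ σ)`. -/
theorem geomKKT_sufficiency (N : ℕ) (hN : 0 < N)
    (q : Fin N → ℝ) (hq : IsPriors q) (hqa : Antitone q)
    (v : Fin N → EuclideanSpace ℝ (Fin 3)) (hv : ∀ i, ‖v i‖ ≤ 1)
    (r : Fin N → ℝ) (w : Fin N → EuclideanSpace ℝ (Fin 3))
    (hr : ∀ i, 0 ≤ r i) (hkkt : GeomKKT q v r w) :
    IsGreatest {x | ∃ M : Fin N → Matrix (Fin 2) (Fin 2) ℂ, IsPOVM M ∧ succProb q v M = x}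
      (q ⟨0, hN⟩ + r ⟨0, hN⟩) ∧
    ∀ p : Fin N → ℝ, (∀ i, 0 < p i) → (∑ i, p i = 1) → (∑ i, p i • w i = 0) →
      IsPOVM (fun i => (p i : ℂ) • (1 - blochOp (w i))) ∧
      succProb q v (fun i => (p i : ℂ) • (1 - blochOp (w i))) = q ⟨0, hN⟩ + r ⟨0, hN⟩ :=
  geomKKT_sufficiency_general N hN q v r w hr hkkt
end

section
/- Key algebraic identity (Eq. (12)): Let N ≥ 1, let q : Fin N → ℝ be priors, and let v : Fin N → EuclideanSpace ℝ (Fin 3). Suppose r : Fin N → ℝ with r i ≥ 0 and w : Fin N → EuclideanSpace ℝ (Fin 3) satisfy the geometric KKT conditions for (q, v), and let p : Fin N → ℝ be a witness of condition (ii) (p i > 0 for all i, ∑ i, p i = 1, ∑ i, p i • w i = 0). Then ∑ i, q i * p i * (1 − ⟪v i, w i⟫) = q 0 + r 0, where ⟪·,·⟫ denotes the real inner product on EuclideanSpace ℝ (Fin 3). -/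
open Matrix Complex Finset RealInnerProductSpace
open scoped ComplexOrder

/-! Condition (i) says that the point `c = r i • w i + q i • v i` does not depend on `i`, and
condition (iv) that neither does `q i + r i`. Pairing `c` with the unit vector `w i` gives
`q i * ⟪v i, w i⟫ = ⟪c, w i⟫ - r i`, and averaging with the weights `p` removes the `c`-term
because `∑ i, p i • w i = 0`. -/

section

variable {ι E : Type*} [Fintype ι] [NormedAddCommGroup E] [InnerProductSpace ℝ E]

theorem inner_smul_add_smul_left_of_norm_eq_one {v w : E} (hw : ‖w‖ = 1) (q r : ℝ) :
    ⟪r • w + q • v, w⟫ = r + q * ⟪v, w⟫ := by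
  rw [inner_add_left, real_inner_smul_left, real_inner_smul_left,
    real_inner_self_eq_norm_sq, hw, one_pow, mul_one]

theorem sum_mul_mul_one_sub_inner_eq {q r p : ι → ℝ} {v w : ι → E} (c : E) (s : ℝ)
    (hc : ∀ i, r i • w i + q i • v i = c) (hs : ∀ i, q i + r i = s)
    (hw : ∀ i, ‖w i‖ = 1) (hp1 : ∑ i, p i = 1) (hpw : ∑ i, p i • w i = 0) :
    ∑ i, q i * p i * (1 - ⟪v i, w i⟫) = s := by
  have hterm : ∀ i, q i * p i * (1 - ⟪v i, w i⟫) = p i * s - p i * ⟪c, w i⟫ := by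
    intro i
    rw [← hc i, inner_smul_add_smul_left_of_norm_eq_one (hw i), ← hs i]
    ring
  calc ∑ i, q i * p i * (1 - ⟪v i, w i⟫)
      = (∑ i, p i) * s - ⟪c, ∑ i, p i • w i⟫ := by
        simp only [hterm, Finset.sum_sub_distrib, Finset.sum_mul, inner_sum, real_inner_smul_right]
    _ = s := by rw [hp1, hpw, inner_zero_right, one_mul, sub_zero]

end

theorem key_identity_general (N : ℕ) (hN : 0 < N)
    (q : Fin N → ℝ)
    (v : Fin N → EuclideanSpace ℝ (Fin 3))
    (r : Fin N → ℝ) (w : Fin N → EuclideanSpace ℝ (Fin 3))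
    (hkkt : GeomKKT q v r w)
    (p : Fin N → ℝ) (hp1 : ∑ i, p i = 1)
    (hpw : ∑ i, p i • w i = 0) :
    ∑ i, q i * p i * (1 - ⟪v i, w i⟫) = q ⟨0, hN⟩ + r ⟨0, hN⟩ := by
  obtain ⟨hdiff, -, hw, hsum⟩ := hkkt
  set i₀ : Fin N := ⟨0, hN⟩
  refine sum_mul_mul_one_sub_inner_eq (r := r) (r i₀ • w i₀ + q i₀ • v i₀) _ (fun i => ?_)
    (fun i => ?_) hw hp1 hpw
  · linear_combination (norm := module) hdiff i i₀
  · linarith [hsum i i₀]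

/-- Key algebraic identity (Eq. (12)):
`∑ i, q i * p i * (1 - ⟪v i, w i⟫) = q 0 + r 0`. -/
theorem key_identity (N : ℕ) (hN : 0 < N)
    (q : Fin N → ℝ) (hq : IsPriors q)
    (v : Fin N → EuclideanSpace ℝ (Fin 3))
    (r : Fin N → ℝ) (w : Fin N → EuclideanSpace ℝ (Fin 3))
    (hr : ∀ i, 0 ≤ r i) (hkkt : GeomKKT q v r w)
    (p : Fin N → ℝ) (hp : ∀ i, 0 < p i) (hp1 : ∑ i, p i = 1)
    (hpw : ∑ i, p i • w i = 0) :
    ∑ i, q i * p i * (1 - ⟪v i, w i⟫) = q ⟨0, hN⟩ + r ⟨0, hN⟩ :=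
  key_identity_general N hN q v r w hkkt p hp1 hpw
end

section
/- Unique intersection of the two hyperbola branches (Appendix): Let l₁, l₂ > 0, θ₁ ∈ Set.Ioo 0 π, 0 ≤ e₁ < l₁, 0 ≤ e₂ < l₂, and assume (l₁*Real.cos θ₁ + e₁)/(l₁+e₁) < (l₁−e₁)/(l₂−e₂) and (l₂*Real.cos θ₁ + e₂)/(l₂+e₂) < (l₂−e₂)/(l₁−e₁). Then there exists a unique χ ∈ Set.Ioo 0 θ₁ such that l₁*Real.cos χ + e₁ > 0, l₂*Real.cos (θ₁−χ) + e₂ > 0, and (l₁^2−e₁^2) * (l₂*Real.cos (θ₁−χ) + e₂) = (l₂^2−e₂^2) * (l₁*Real.cos χ + e₁). -/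
open Matrix Complex Finset RealInnerProductSpace
open scoped ComplexOrder

/-!
Clearing denominators, the intersection points are the zeros on `[0, θ₁]` of
`f χ = (l₁² - e₁²)(l₂ cos (θ₁ - χ) + e₂) - (l₂² - e₂²)(l₁ cos χ + e₁)`.
Since `cos` is strictly decreasing on `[0, π]`, `f` is strictly increasing on `[0, θ₁]`, and the two
hypotheses on `θ₁` say exactly that `f 0 < 0 < f θ₁`; the intermediate value theorem gives a unique
zero. At that zero the two brackets have the same sign, and one of them is positive because
`χ` or `θ₁ - χ` is below `π / 2`.
-/

open Set
open scoped Real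

theorem existsUnique_mem_Ioo_eq_of_strictMonoOn {f : ℝ → ℝ} {a b y : ℝ} (hab : a ≤ b)
    (hf : ContinuousOn f (Icc a b)) (hmono : StrictMonoOn f (Icc a b))
    (ha : f a < y) (hb : y < f b) : ∃! x, x ∈ Ioo a b ∧ f x = y := by
  obtain ⟨x, hx, hfx⟩ := intermediate_value_Ioo hab hf ⟨ha, hb⟩
  refine ⟨x, ⟨hx, hfx⟩, fun x' ⟨hx', hfx'⟩ => ?_⟩
  exact hmono.injOn (Ioo_subset_Icc_self hx') (Ioo_subset_Icc_self hx) (hfx'.trans hfx.symm)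

theorem strictMonoOn_cos_sub {θ : ℝ} (hθ : θ ≤ π) :
    StrictMonoOn (fun x => Real.cos (θ - x)) (Icc 0 θ) := fun x hx y hy hxy =>
  Real.strictAntiOn_cos ⟨by linarith [hy.2], by linarith [hy.1]⟩
    ⟨by linarith [hx.2], by linarith [hx.1]⟩ (by linarith)

theorem strictMonoOn_mul_cos_sub_sub_mul_cos {a b l₁ l₂ e₁ e₂ θ : ℝ} (ha : 0 < a) (hb : 0 < b)
    (hl₁ : 0 < l₁) (hl₂ : 0 < l₂) (hθ : θ ≤ π) :
    StrictMonoOn (fun χ => a * (l₂ * Real.cos (θ - χ) + e₂) - b * (l₁ * Real.cos χ + e₁))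
      (Icc 0 θ) := by
  intro x hx y hy hxy
  have hcos_sub : Real.cos (θ - x) < Real.cos (θ - y) := strictMonoOn_cos_sub hθ hx hy hxy
  have hcos : Real.cos y < Real.cos x :=
    (Real.strictAntiOn_cos.mono (Icc_subset_Icc_right hθ)) hx hy hxy
  dsimp only
  gcongr

theorem cos_pos_or_cos_pos_of_add_lt_pi {x y : ℝ} (hx : -(π / 2) < x) (hy : -(π / 2) < y)
    (hxy : x + y < π) : 0 < Real.cos x ∨ 0 < Real.cos y := by
  rcases le_total x y with h | h
  · exact .inl (Real.cos_pos_of_mem_Ioo ⟨hx, by linarith⟩)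
  · exact .inr (Real.cos_pos_of_mem_Ioo ⟨hy, by linarith⟩)

theorem pos_and_pos_of_mul_eq_mul {α : Type*} [Semiring α] [LinearOrder α] [IsStrictOrderedRing α]
    {a b x y : α} (ha : 0 < a) (hb : 0 < b) (h : a * x = b * y) (hxy : 0 < x ∨ 0 < y) :
    0 < x ∧ 0 < y := by
  rcases hxy with hx | hy
  · exact ⟨hx, pos_of_mul_pos_right (h ▸ mul_pos ha hx) hb.le⟩
  · exact ⟨pos_of_mul_pos_right (h ▸ mul_pos hb hy) ha.le, hy⟩

theorem sq_sub_sq_mul_lt_of_div_lt_div {l₁ l₂ e₁ e₂ c : ℝ} (h₁ : 0 < l₁ - e₁) (h₁' : 0 < l₁ + e₁)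
    (h₂ : 0 < l₂ + e₂) (hc : (l₂ * c + e₂) / (l₂ + e₂) < (l₂ - e₂) / (l₁ - e₁)) :
    (l₁ ^ 2 - e₁ ^ 2) * (l₂ * c + e₂) < (l₂ ^ 2 - e₂ ^ 2) * (l₁ + e₁) := by
  rw [div_lt_div_iff₀ h₂ h₁] at hc
  nlinarith [mul_lt_mul_of_pos_right hc h₁']

/-- Unique intersection of the two hyperbola branches (Appendix). -/
theorem hyperbola_branches_unique_intersection
    (l₁ l₂ e₁ e₂ θ₁ : ℝ) (hl₁ : 0 < l₁) (hl₂ : 0 < l₂)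
    (hθ₁ : θ₁ ∈ Set.Ioo 0 Real.pi)
    (he₁ : 0 ≤ e₁) (he₁l : e₁ < l₁) (he₂ : 0 ≤ e₂) (he₂l : e₂ < l₂)
    (hcond₁ : (l₁ * Real.cos θ₁ + e₁) / (l₁ + e₁) < (l₁ - e₁) / (l₂ - e₂))
    (hcond₂ : (l₂ * Real.cos θ₁ + e₂) / (l₂ + e₂) < (l₂ - e₂) / (l₁ - e₁)) :
    ∃! χ : ℝ, χ ∈ Set.Ioo 0 θ₁ ∧
      0 < l₁ * Real.cos χ + e₁ ∧
      0 < l₂ * Real.cos (θ₁ - χ) + e₂ ∧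
      (l₁ ^ 2 - e₁ ^ 2) * (l₂ * Real.cos (θ₁ - χ) + e₂) =
        (l₂ ^ 2 - e₂ ^ 2) * (l₁ * Real.cos χ + e₁) := by
  have hA : 0 < l₁ ^ 2 - e₁ ^ 2 := by nlinarith
  have hB : 0 < l₂ ^ 2 - e₂ ^ 2 := by nlinarith
  have hf0 := sq_sub_sq_mul_lt_of_div_lt_div (by linarith) (by linarith) (by linarith) hcond₂
  have hfθ := sq_sub_sq_mul_lt_of_div_lt_div (by linarith) (by linarith) (by linarith) hcond₁
  have hmono := strictMonoOn_mul_cos_sub_sub_mul_cos (e₁ := e₁) (e₂ := e₂) hA hB hl₁ hl₂ hθ₁.2.le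
  obtain ⟨χ, ⟨hχ, hroot⟩, huniq⟩ := existsUnique_mem_Ioo_eq_of_strictMonoOn hθ₁.1.le
    (by fun_prop) hmono (y := 0) (by simpa using hf0) (by simpa using hfθ)
  have heq := sub_eq_zero.mp hroot
  have hsign : 0 < l₂ * Real.cos (θ₁ - χ) + e₂ ∨ 0 < l₁ * Real.cos χ + e₁ :=
    (cos_pos_or_cos_pos_of_add_lt_pi (x := θ₁ - χ) (y := χ) (by linarith [hχ.2, Real.pi_pos])
      (by linarith [hχ.1, Real.pi_pos]) (by linarith [hθ₁.2])).imp
      (fun h => by positivity) (fun h => by positivity)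
  obtain ⟨hpos₂, hpos₁⟩ := pos_and_pos_of_mul_eq_mul hA hB heq hsign
  refine ⟨χ, ⟨hχ, hpos₁, hpos₂, heq⟩, ?_⟩
  rintro y ⟨hy, -, -, hyeq⟩
  exact huniq y ⟨hy, sub_eq_zero.mpr hyeq⟩
end

section
/- Nonempty intersection of a triangle interior with a hyperbola branch (Appendix): Let T₁, T₂, T₃ ∈ EuclideanSpace ℝ (Fin 2) be affinely independent and let e ≥ 0. Then there exists a point Q in the interior of the convex hull of {T₁, T₂, T₃} with dist Q T₂ − dist Q T₁ = e if and only if e < dist T₁ T₂. -/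
open Matrix Complex Finset RealInnerProductSpace
open scoped ComplexOrder

/-!
Let `f Q = dist Q T₂ - dist Q T₁`. By the triangle inequality `f ≤ dist T₁ T₂`, with equality
only when `T₁` lies on the segment from `Q` to `T₂`; for `Q` inside the triangle this is
impossible, since the barycentric coordinate of `T₂` is positive at `Q` and at `T₂` but vanishes
at `T₁`. Conversely `f` takes the values `± dist T₁ T₂` at `T₁` and `T₂`, which lie in the
closure of the (connected) interior, so `f` takes every value strictly in between on the interior.
-/

theorem AffineBasis.not_wbtw_of_mem_interior_convexHull {ι E : Type*} [Finite ι]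
    [NormedAddCommGroup E] [NormedSpace ℝ E] (b : AffineBasis ι ℝ E) {i j : ι} (hij : i ≠ j)
    {x : E} (hx : x ∈ interior (convexHull ℝ (Set.range b))) : ¬ Wbtw ℝ x (b i) (b j) := by
  rintro ⟨t, ⟨ht₀, ht₁⟩, hxt⟩
  have hxj : 0 < b.coord j x := by
    rw [b.interior_convexHull] at hx
    exact hx j
  have hcoord := congrArg (b.coord j) hxt
  rw [AffineMap.apply_lineMap, AffineMap.lineMap_apply_module, b.coord_apply_eq,
    b.coord_apply_ne hij.symm, smul_eq_mul, smul_eq_mul] at hcoord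
  rcases ht₁.lt_or_eq with ht₁ | rfl
  · nlinarith [mul_pos (sub_pos.2 ht₁) hxj]
  · linarith

theorem Convex.Ioo_subset_image_interior {E α : Type*} [AddCommGroup E] [Module ℝ E]
    [TopologicalSpace E] [IsTopologicalAddGroup E] [ContinuousSMul ℝ E] [LinearOrder α]
    [TopologicalSpace α] [OrderClosedTopology α] {s : Set E} (hs : Convex ℝ s)
    (hne : (interior s).Nonempty) {f : E → α} (hf : Continuous f) {x y : E}
    (hx : x ∈ closure s) (hy : y ∈ closure s) : Set.Ioo (f x) (f y) ⊆ f '' interior s := by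
  rw [← hs.closure_interior_eq_closure_of_nonempty_interior hne,
    mem_closure_iff_nhdsWithin_neBot] at hx hy
  exact hs.interior.isPreconnected.intermediate_value_Ioo (l₁ := nhdsWithin x (interior s))
    (l₂ := nhdsWithin y (interior s)) inf_le_right inf_le_right
    hf.continuousOn (hf.continuousAt.mono_left inf_le_left)
    (hf.continuousAt.mono_left inf_le_left)

/-- Nonempty intersection of a triangle interior with a hyperbola branch
(Appendix). -/
theorem triangle_hyperbola_intersection
    (T₁ T₂ T₃ : EuclideanSpace ℝ (Fin 2))
    (hT : AffineIndependent ℝ ![T₁, T₂, T₃]) (e : ℝ) (he : 0 ≤ e) :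
    (∃ Q ∈ interior (convexHull ℝ {T₁, T₂, T₃}),
        dist Q T₂ - dist Q T₁ = e) ↔ e < dist T₁ T₂ := by
  let b : AffineBasis (Fin 3) ℝ (EuclideanSpace ℝ (Fin 2)) :=
    ⟨![T₁, T₂, T₃], hT, hT.affineSpan_eq_top_iff_card_eq_finrank_add_one.2 (by simp)⟩
  have hb : Set.range b = {T₁, T₂, T₃} := by
    change Set.range ![T₁, T₂, T₃] = _
    rw [range_cons, range_cons, range_cons_empty, Set.singleton_union, Set.singleton_union]
  rw [← hb]
  constructor
  · rintro ⟨Q, hQ, rfl⟩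
    by_contra! hle
    exact b.not_wbtw_of_mem_interior_convexHull (i := 0) (j := 1) (by decide) hQ
      (dist_add_dist_eq_iff.1 (by linarith [dist_triangle Q T₁ T₂]) : Wbtw ℝ Q T₁ T₂)
  · intro he'
    have hvertex (i : Fin 3) : b i ∈ closure (convexHull ℝ (Set.range b)) :=
      subset_closure (subset_convexHull ℝ _ (Set.mem_range_self i))
    have hd : 0 < dist T₁ T₂ := dist_pos.2 (hT.injective.ne (by decide : (0 : Fin 3) ≠ 1))
    obtain ⟨Q, hQ, hfQ⟩ := (convex_convexHull ℝ _).Ioo_subset_image_interior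
      ⟨_, b.centroid_mem_interior_convexHull⟩ (f := fun Q => dist Q T₂ - dist Q T₁)
      (by fun_prop) (hvertex 1) (hvertex 0)
      (show e ∈ Set.Ioo (dist T₂ T₂ - dist T₂ T₁) (dist T₁ T₂ - dist T₁ T₁) by
        rw [dist_self, dist_self, dist_comm]; constructor <;> linarith)
    exact ⟨Q, hQ, hfQ⟩
end

section
/- Criterion for a point on a ray from a vertex to lie inside a triangle (Appendix, Fig. 1): Let T₁, T₂, T₃ ∈ EuclideanSpace ℝ (Fin 2) be affinely independent, with θ₁ = ∠ T₂ T₁ T₃ and θ₂ = ∠ T₁ T₂ T₃ the interior angles at T₁ and T₂. Let O ∈ EuclideanSpace ℝ (Fin 2) with O ≠ T₁, set χ = ∠ T₂ T₁ O, and assume 0 < χ < θ₁ and that O and T₃ lie strictly on the same side of the line through T₁ and T₂. Then O lies in the interior of the convex hull of {T₁, T₂, T₃} if and only if dist T₁ O < dist T₁ T₂ * Real.sin θ₂ / Real.sin (χ + θ₂). -/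
/-!
Orient the plane so that `T₃` lies on the positive side of `T₁T₂`, and let `ω` be the area form.
By Cramer's rule the barycentric coordinates of `O` are `ω (T₂ - O) (T₃ - O)`,
`ω (O - T₁) (T₃ - T₁)` and `ω (T₂ - T₁) (O - T₁)` up to the positive factor
`ω (T₂ - T₁) (T₃ - T₁)`, so `O` is interior iff all three are positive. The third is the
same-side hypothesis; the second equals `|T₁O| |T₁T₃| Real.sin (θ₁ - χ)`; and the first equals
`(|T₁T₂| sin θ₂ - |T₁O| Real.sin (χ + θ₂)) |T₂T₃|`, whose sign is the distance criterion
(`|T₁T₂| sin θ₂ / Real.sin (χ + θ₂)` is, by the law of sines, the distance from `T₁` to side `T₂T₃`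
along the ray through `O`).
-/

open Matrix Complex Finset RealInnerProductSpace
open scoped ComplexOrder

open Module InnerProductGeometry
open scoped Real EuclideanGeometry

attribute [local instance] FiniteDimensional.of_fact_finrank_eq_two

variable {V : Type*} [NormedAddCommGroup V] [InnerProductSpace ℝ V] [Fact (finrank ℝ V = 2)]

namespace Orientation

variable (o : Orientation ℝ V (Fin 2))

local notation "ω" => o.areaForm

theorem abs_areaForm_eq_mul_sin_angle (x y : V) :
    |ω x y| = ‖x‖ * ‖y‖ * Real.sin (angle x y) := by
  rw [mul_comm, sin_angle_mul_norm_mul_norm, ← Real.sqrt_sq_eq_abs,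
    real_inner_self_eq_norm_mul_norm, real_inner_self_eq_norm_mul_norm]
  congr 1
  linear_combination o.inner_sq_add_areaForm_sq x y

theorem areaForm_eq_zero_iff {x : V} (hx : x ≠ 0) (y : V) : ω x y = 0 ↔ ∃ r : ℝ, r • x = y := by
  refine ⟨fun h => ?_, ?_⟩
  · rcases le_total 0 ⟪x, y⟫ with hxy | hxy
    · obtain ⟨r, -, hr⟩ :=
        ((o.nonneg_inner_and_areaForm_eq_zero_iff_sameRay x y).1 ⟨hxy, h⟩).exists_nonneg_left hx
      exact ⟨r, hr⟩
    · obtain ⟨r, -, hr⟩ := ((o.nonneg_inner_and_areaForm_eq_zero_iff_sameRay x (-y)).1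
        ⟨by simpa using hxy, by simpa using h⟩).exists_nonneg_left hx
      exact ⟨-r, by rw [neg_smul, hr, neg_neg]⟩
  · rintro ⟨r, rfl⟩
    simp

theorem eq_smul_add_smul_of_areaForm_ne_zero {u w : V} (h : ω u w ≠ 0) (x : V) :
    x = (ω x w / ω u w) • u + (ω u x / ω u w) • w := by
  set z := ω u w • x - ω x w • u - ω u x • w with hz_def
  have hzu : ω z u = 0 := by
    simp only [z, map_sub, map_smul, LinearMap.sub_apply, LinearMap.smul_apply, smul_eq_mul,
      areaForm_apply_self, o.areaForm_swap u x, o.areaForm_swap u w]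
    ring
  have hzw : ω z w = 0 := by
    simp only [z, map_sub, map_smul, LinearMap.sub_apply, LinearMap.smul_apply, smul_eq_mul,
      areaForm_apply_self]
    ring
  -- `inner_mul_areaForm_sub z u w` reads `0 = ‖z‖ ^ 2 * ω u w`
  have hz : z = 0 := by
    simpa [hzu, hzw, h] using o.inner_mul_areaForm_sub z u w
  rw [hz_def, sub_sub, sub_eq_zero] at hz
  rw [div_eq_inv_mul, div_eq_inv_mul, mul_smul, mul_smul, ← smul_add, ← hz, inv_smul_smul₀ h]

theorem areaForm_eq_norm_mul_norm_mul_sin_angle_sub {u x w : V} (hu : u ≠ 0) (hw : 0 ≤ ω u w)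
    (hx : 0 ≤ ω u x) : ω x w = ‖x‖ * ‖w‖ * Real.sin (angle u w - angle u x) := by
  have key := o.inner_mul_areaForm_sub u x w
  rw [← abs_of_nonneg hw, ← abs_of_nonneg hx, o.abs_areaForm_eq_mul_sin_angle,
    o.abs_areaForm_eq_mul_sin_angle, ← cos_angle_mul_norm_mul_norm,
    ← cos_angle_mul_norm_mul_norm] at key
  have hu2 : ‖u‖ ^ 2 ≠ 0 := by positivity
  apply mul_left_cancel₀ hu2
  rw [Real.sin_sub, ← key]
  ring

theorem areaForm_sub_sub_eq_norm_mul_sin {u x w : V} (hu : u ≠ 0) (hw : 0 ≤ ω u w)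
    (hx : 0 ≤ ω u x) :
    ω (u - x) (w - x) = (‖u‖ * Real.sin (angle (-u) (w - u)) -
      ‖x‖ * Real.sin (angle u x + angle (-u) (w - u))) * ‖w - u‖ := by
  have hsx : ω u x = ‖u‖ * ‖x‖ * Real.sin (angle u x) := by
    rw [← o.abs_areaForm_eq_mul_sin_angle, abs_of_nonneg hx]
  have hcx := cos_angle_mul_norm_mul_norm u x
  have hsB : ω u w = ‖u‖ * ‖w - u‖ * Real.sin (angle (-u) (w - u)) := by
    rw [← norm_neg u, ← o.abs_areaForm_eq_mul_sin_angle]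
    simp [abs_of_nonneg hw]
  have hcB := cos_angle_mul_norm_mul_norm (-u) (w - u)
  rw [norm_neg, inner_neg_left, inner_sub_right, real_inner_self_eq_norm_sq] at hcB
  have hcB' : ⟪u, w⟫ = ‖u‖ ^ 2 - Real.cos (angle (-u) (w - u)) * (‖u‖ * ‖w - u‖) := by linarith
  have key := o.inner_mul_areaForm_sub u x w
  rw [hsx, hsB, ← hcx, hcB'] at key
  have hu2 : ‖u‖ ^ 2 ≠ 0 := by positivity
  apply mul_left_cancel₀ hu2
  simp only [map_sub, LinearMap.sub_apply, areaForm_apply_self, hsx, hsB]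
  rw [Real.sin_add]
  linear_combination key

variable {A B C X Y : V}

theorem areaForm_sub_eq_zero_iff_mem_line (hAB : A ≠ B) :
    ω (B - A) (X - A) = 0 ↔ X ∈ line[ℝ, A, B] := by
  rw [o.areaForm_eq_zero_iff (sub_ne_zero.2 hAB.symm)]
  conv_rhs => rw [← vsub_vadd X A, vadd_left_mem_affineSpan_pair]
  rfl

theorem areaForm_sub_sub_eq_dist_mul_sin (hAB : A ≠ B) (hC : 0 ≤ ω (B - A) (C - A))
    (hX : 0 ≤ ω (B - A) (X - A)) :
    ω (B - X) (C - X) =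
      (dist A B * Real.sin (∠ A B C) - dist A X * Real.sin (∠ B A X + ∠ A B C)) * dist B C := by
  have h := o.areaForm_sub_sub_eq_norm_mul_sin (sub_ne_zero.2 hAB.symm) hC hX
  rw [sub_sub_sub_cancel_right, sub_sub_sub_cancel_right, sub_sub_sub_cancel_right, neg_sub] at h
  rw [h, dist_comm A B, dist_comm A X, dist_comm B C, dist_eq_norm, dist_eq_norm, dist_eq_norm]
  rfl

theorem areaForm_mul_pos_of_sSameSide (hAB : A ≠ B) (h : line[ℝ, A, B].SSameSide X Y) :
    0 < ω (B - A) (X - A) * ω (B - A) (Y - A) := by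
  rw [AffineSubspace.sSameSide_iff_exists_left (left_mem_affineSpan_pair ℝ A B)] at h
  obtain ⟨hX, hY, P, hP, hXY⟩ := h
  have hP' : ω (B - A) (Y - P) = ω (B - A) (Y - A) := by
    rw [← sub_sub_sub_cancel_right Y P A, map_sub, (o.areaForm_sub_eq_zero_iff_mem_line hAB).2 hP,
      sub_zero]
  have hX' := mt (o.areaForm_sub_eq_zero_iff_mem_line hAB).1 hX
  have hY' := mt (o.areaForm_sub_eq_zero_iff_mem_line hAB).1 hY
  obtain ⟨r, hr, hr'⟩ := (hXY.map (ω (B - A))).exists_pos_left hX' (by rwa [vsub_eq_sub, hP'])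
  rw [vsub_eq_sub, vsub_eq_sub, hP', smul_eq_mul] at hr'
  rw [← hr', ← mul_assoc, mul_comm _ r, mul_assoc]
  exact mul_pos hr (mul_self_pos.2 hX')

theorem areaForm_pos_of_angle_lt (hC : 0 < ω (B - A) (C - A)) (hX : 0 < ω (B - A) (X - A))
    (h : ∠ B A X < ∠ B A C) : 0 < ω (X - A) (C - A) := by
  change angle (B - A) (X - A) < angle (B - A) (C - A) at h
  have hBA : B - A ≠ 0 := by rintro h0; simp [h0] at hC
  have hXA : X - A ≠ 0 := by rintro h0; simp [h0] at hX
  have hCA : C - A ≠ 0 := by rintro h0; simp [h0] at hC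
  have hC' := o.abs_areaForm_eq_mul_sin_angle (B - A) (C - A)
  rw [abs_of_pos hC] at hC'
  have hθ : angle (B - A) (C - A) < π := (angle_le_pi _ _).lt_of_ne fun hπ => by
    rw [hπ, Real.sin_pi, mul_zero] at hC'
    exact hC.ne' hC'
  rw [o.areaForm_eq_norm_mul_norm_mul_sin_angle_sub hBA hC.le hX.le]
  exact mul_pos (mul_pos (norm_pos_iff.2 hXA) (norm_pos_iff.2 hCA))
    (Real.sin_pos_of_pos_of_lt_pi (by linarith [h]) (by linarith [angle_nonneg (B - A) (X - A)]))

theorem mem_interior_convexHull_iff_areaForm_pos (h : 0 < ω (B - A) (C - A)) :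
    X ∈ interior (convexHull ℝ {A, B, C}) ↔
      0 < ω (B - X) (C - X) ∧ 0 < ω (X - A) (C - A) ∧ 0 < ω (B - A) (X - A) := by
  have hAB : A ≠ B := by rintro rfl; simp at h
  have hC : C ∉ line[ℝ, A, B] := fun hC => h.ne' ((o.areaForm_sub_eq_zero_iff_mem_line hAB).2 hC)
  have hind : AffineIndependent ℝ ![A, B, C] := affineIndependent_of_ne_of_mem_of_mem_of_notMem
    hAB (left_mem_affineSpan_pair ℝ A B) (right_mem_affineSpan_pair ℝ A B) hC
  let b : AffineBasis (Fin 3) ℝ V := ⟨![A, B, C], hind, by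
    rw [hind.affineSpan_eq_top_iff_card_eq_finrank_add_one]; simp [(Fact.out : finrank ℝ V = 2)]⟩
  have hrange : Set.range b = {A, B, C} := by
    change Set.range ![A, B, C] = _
    rw [Matrix.range_cons, Matrix.range_cons, Matrix.range_cons, Matrix.range_empty,
      Set.union_empty, Set.singleton_union, Set.singleton_union]
  set D := ω (B - A) (C - A)
  set s := ω (X - A) (C - A) / D
  set t := ω (B - A) (X - A) / D
  have hs : 1 - s - t = ω (B - X) (C - X) / D := by
    rw [eq_div_iff h.ne', sub_mul, sub_mul, div_mul_cancel₀ _ h.ne', div_mul_cancel₀ _ h.ne',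
      ← sub_sub_sub_cancel_right B X A, ← sub_sub_sub_cancel_right C X A]
    simp only [D, map_sub, LinearMap.sub_apply, areaForm_apply_self]
    linear_combination o.areaForm_swap X A
  have hsum : ∑ i, ![1 - s - t, s, t] i = 1 := by
    rw [Fin.sum_univ_three]
    change 1 - s - t + s + t = 1
    ring
  have hcomb : Finset.univ.affineCombination ℝ b ![1 - s - t, s, t] = X := by
    rw [Finset.affineCombination_eq_linear_combination _ _ _ hsum, Fin.sum_univ_three]
    change (1 - s - t) • A + s • B + t • C = X
    conv_rhs => rw [← sub_add_cancel X A, o.eq_smul_add_smul_of_areaForm_ne_zero h.ne' (X - A)]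
    module
  have hcoord (i : Fin 3) : b.coord i X = ![1 - s - t, s, t] i :=
    hcomb ▸ b.coord_apply_combination_of_mem (Finset.mem_univ i) hsum
  rw [← hrange, b.interior_convexHull, Set.mem_ofPred_eq]
  simp only [hcoord, Fin.forall_fin_succ, Matrix.cons_val_zero, Matrix.cons_val_succ,
    IsEmpty.forall_iff, and_true, hs, s, t, div_pos_iff_of_pos_right h]

end Orientation

theorem exists_orientation_areaForm_pos {A B C : V} (hAB : A ≠ B) (hC : C ∉ line[ℝ, A, B]) :
    ∃ o : Orientation ℝ V (Fin 2), 0 < o.areaForm (B - A) (C - A) := by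
  let o : Orientation ℝ V (Fin 2) := (Module.finBasisOfFinrankEq ℝ V Fact.out).orientation
  rcases lt_or_gt_of_ne (mt (o.areaForm_sub_eq_zero_iff_mem_line hAB).1 hC) with h | h
  · exact ⟨-o, by rwa [Orientation.areaForm_neg_orientation, LinearMap.neg_apply,
      LinearMap.neg_apply, neg_pos]⟩
  · exact ⟨o, h⟩

open EuclideanGeometry in
theorem point_in_triangle_criterion_general
    (T₁ T₂ T₃ O : EuclideanSpace ℝ (Fin 2))
    (hT : AffineIndependent ℝ ![T₁, T₂, T₃])
    (θ₁ θ₂ χ : ℝ)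
    (hθ₁ : θ₁ = ∠ T₂ T₁ T₃) (hθ₂ : θ₂ = ∠ T₁ T₂ T₃) (hχ : χ = ∠ T₂ T₁ O)
    (hχ0 : 0 < χ) (hχθ₁ : χ < θ₁)
    (hside : (affineSpan ℝ {T₁, T₂}).SSameSide O T₃) :
    O ∈ interior (convexHull ℝ {T₁, T₂, T₃}) ↔
      dist T₁ O < dist T₁ T₂ * Real.sin θ₂ / Real.sin (χ + θ₂) := by
  subst hθ₁ hθ₂ hχ
  have : Fact (finrank ℝ (EuclideanSpace ℝ (Fin 2)) = 2) := ⟨finrank_euclideanSpace_fin⟩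
  have h₁₂ : T₁ ≠ T₂ := hT.injective.ne (by decide : (0 : Fin 3) ≠ 1)
  have h₂₃ : 0 < dist T₂ T₃ := dist_pos.2 (hT.injective.ne (by decide : (1 : Fin 3) ≠ 2))
  obtain ⟨o, hT₃⟩ := exists_orientation_areaForm_pos h₁₂ hside.2.2
  have hO : 0 < o.areaForm (T₂ - T₁) (O - T₁) :=
    pos_of_mul_pos_left (o.areaForm_mul_pos_of_sSameSide h₁₂ hside) hT₃.le
  have hsin : 0 < Real.sin (∠ T₂ T₁ O + ∠ T₁ T₂ T₃) := by
    have hsum := angle_add_angle_add_angle_eq_pi T₃ h₁₂.symm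
    have h₃ : 0 < ∠ T₂ T₃ T₁ := angle_pos_of_not_collinear <| by
      rw [Set.pair_comm T₃ T₁, Set.insert_comm T₂ T₁]
      exact affineIndependent_iff_not_collinear_set.1 hT
    rw [angle_comm T₃ T₁ T₂] at hsum
    exact Real.sin_pos_of_pos_of_lt_pi (by linarith [angle_nonneg T₁ T₂ T₃]) (by linarith)
  rw [o.mem_interior_convexHull_iff_areaForm_pos hT₃,
    o.areaForm_sub_sub_eq_dist_mul_sin h₁₂ hT₃.le hO.le, mul_pos_iff_of_pos_right h₂₃, sub_pos,
    lt_div_iff₀ hsin]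
  exact and_iff_left ⟨o.areaForm_pos_of_angle_lt hT₃ hO hχθ₁, hO⟩

open EuclideanGeometry in
/-- Criterion for a point on a ray from a vertex to lie inside a triangle
(Appendix, Fig. 1). -/
theorem point_in_triangle_criterion
    (T₁ T₂ T₃ O : EuclideanSpace ℝ (Fin 2))
    (hT : AffineIndependent ℝ ![T₁, T₂, T₃]) (hO : O ≠ T₁)
    (θ₁ θ₂ χ : ℝ)
    (hθ₁ : θ₁ = ∠ T₂ T₁ T₃) (hθ₂ : θ₂ = ∠ T₁ T₂ T₃) (hχ : χ = ∠ T₂ T₁ O)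
    (hχ0 : 0 < χ) (hχθ₁ : χ < θ₁)
    (hside : (affineSpan ℝ {T₁, T₂}).SSameSide O T₃) :
    O ∈ interior (convexHull ℝ {T₁, T₂, T₃}) ↔
      dist T₁ O < dist T₁ T₂ * Real.sin θ₂ / Real.sin (χ + θ₂) :=
  point_in_triangle_criterion_general T₁ T₂ T₃ O hT θ₁ θ₂ χ hθ₁ hθ₂ hχ hχ0 hχθ₁ hside
end
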